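/- arXiv:2311.10308 — 2 statements merged into one kernel-verified Lean document; each statement's English description precedes it below -/
import Mathlib

section
/- Let Γ be a finite non-abelian group with |Z(Γ)| ≥ 2. If the rainbow connection number of the commuting graph CG(Γ) equals 3, then Γ has more than 2^{|Z(Γ)|} maximal abelian subgroups. -/
/-- The commuting graph of a group: vertices are group elements, two distinct
elements are adjacent iff they commute. -/
def commutingGraph (Γ : Type*) [Group Γ] : SimpleGraph Γ where
  Adj a b := a ≠ b ∧ a * b = b * a
  symm := by
    constructor
    intro a b h
    exact ⟨h.1.symm, h.2.symm⟩
  loopless := by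
    constructor
    intro a h
    exact h.1 rfl

/-- The commuting graph on a subset `X` of a group. -/
def commutingGraphOn (Γ : Type*) [Group Γ] (X : Set Γ) : SimpleGraph X where
  Adj a b := a ≠ b ∧ (a : Γ) * (b : Γ) = (b : Γ) * (a : Γ)
  symm := by
    constructor
    intro a b h
    exact ⟨h.1.symm, h.2.symm⟩
  loopless := by
    constructor
    intro a h
    exact h.1 rfl

/-- The rainbow connection number of a graph: the least `k` such that there is an
edge coloring with `k` colors under which every two distinct vertices are joined
by a path whose edges have pairwise distinct colors. -/
noncomputable def rainbowConnectionNumber {V : Type*} (G : SimpleGraph V) : ℕ :=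
  sInf {k : ℕ | ∃ c : Sym2 V → Fin k,
    ∀ u v : V, u ≠ v → ∃ p : G.Walk u v, p.IsPath ∧ (p.edges.map c).Nodup}

/-- A subgroup is a maximal abelian subgroup if it is abelian and is not properly
contained in any abelian subgroup. -/
def IsMaximalAbelian {Γ : Type*} [Group Γ] (H : Subgroup Γ) : Prop :=
  IsMulCommutative H ∧ ∀ K : Subgroup Γ, IsMulCommutative K → H ≤ K → K = H

lemma exists_maximalAbelian_mem' {Γ : Type*} [Group Γ] [Finite Γ] (x : Γ) :
    ∃ H : Subgroup Γ, IsMaximalAbelian H ∧ x ∈ H := by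
  obtain ⟨H, hHs, hmax⟩ := Set.Finite.exists_maximalFor id
    {K : Subgroup Γ | IsMulCommutative K ∧ x ∈ K} (Set.toFinite _)
    ⟨Subgroup.zpowers x, ⟨Subgroup.zpowers_isMulCommutative x, Subgroup.mem_zpowers x⟩⟩
  exact ⟨H, ⟨hHs.1, fun K hK hHK => le_antisymm (hmax ⟨hK, hHK hHs.2⟩ hHK) hHK⟩, hHs.2⟩

theorem lt_ncard_maximalAbelian_of_rc_eq_three (Γ : Type*) [Group Γ] [Finite Γ]
    (hna : ∃ a b : Γ, a * b ≠ b * a)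
    (hz : 2 ≤ Nat.card (Subgroup.center Γ))
    (hrc : rainbowConnectionNumber (commutingGraph Γ) = 3) :
    2 ^ Nat.card (Subgroup.center Γ) <
      {H : Subgroup Γ | IsMaximalAbelian H}.ncard := by
  classical
  by_contra hcon
  push_neg at hcon
  set Z := Subgroup.center Γ with hZ
  choose M hM hmem using exists_maximalAbelian_mem' (Γ := Γ)
  haveI : Fintype {H : Subgroup Γ // IsMaximalAbelian H} := Fintype.ofFinite _
  haveI : Fintype (Z → Fin 2) := Fintype.ofFinite _
  have hcard : Fintype.card {H : Subgroup Γ // IsMaximalAbelian H} ≤ Fintype.card (Z → Fin 2) := by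
    rw [← Nat.card_eq_fintype_card, ← Nat.card_eq_fintype_card, Nat.card_fun,
      Nat.card_eq_fintype_card (α := Fin 2), Fintype.card_fin]
    rw [← Nat.card_coe_set_eq] at hcon
    exact hcon
  obtain ⟨ι⟩ := Function.Embedding.nonempty_of_card_le hcard
  set label : Γ → (Z → Fin 2) := fun x => ι ⟨M x, hM x⟩ with hlabdef
  have hlabel : ∀ u v : Γ, u * v ≠ v * u → label u ≠ label v := by
    intro u v huv h
    apply huv
    have hMeq : M u = M v := congrArg Subtype.val (ι.injective h)
    have hu : u ∈ M v := hMeq ▸ hmem u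
    haveI := (hM v).1
    exact Subgroup.mul_comm_of_mem_isMulCommutative (H := M v) hu (hmem v)
  set f : Γ → Γ → Fin 2 := fun x y =>
    if h : x ∈ Z ∧ y ∉ Z then label y ⟨x, h.1⟩
    else if h' : y ∈ Z ∧ x ∉ Z then label x ⟨y, h'.1⟩ else 0 with hf
  have fsymm : ∀ x y : Γ, f x y = f y x := by
    intro x y
    by_cases hx : x ∈ Z <;> by_cases hy : y ∈ Z <;> simp [hf, hx, hy]
  set c : Sym2 Γ → Fin 2 := Sym2.lift ⟨f, fsymm⟩ with hc
  have h2 : (2 : ℕ) ∈ {k : ℕ | ∃ c : Sym2 Γ → Fin k,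
      ∀ u v : Γ, u ≠ v → ∃ p : (commutingGraph Γ).Walk u v, p.IsPath ∧ (p.edges.map c).Nodup} := by
    refine ⟨c, fun u v huv => ?_⟩
    by_cases hcomm : u * v = v * u
    · exact ⟨SimpleGraph.Walk.cons (show (commutingGraph Γ).Adj u v from ⟨huv, hcomm⟩) SimpleGraph.Walk.nil,
        by simp [SimpleGraph.Walk.isPath_def, huv], by simp⟩
    · have hu : u ∉ Z := fun h => hcomm ((Subgroup.mem_center_iff.1 h v).symm)
      have hv : v ∉ Z := fun h => hcomm (Subgroup.mem_center_iff.1 h u)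
      obtain ⟨z, hzne⟩ := Function.ne_iff.1 (hlabel u v hcomm)
      have hzu : (z : Γ) ≠ u := fun h => hu (h ▸ z.2)
      have hzv : (z : Γ) ≠ v := fun h => hv (h ▸ z.2)
      have adj1 : (commutingGraph Γ).Adj u z := ⟨Ne.symm hzu, Subgroup.mem_center_iff.1 z.2 u⟩
      have adj2 : (commutingGraph Γ).Adj (z : Γ) v := ⟨hzv, (Subgroup.mem_center_iff.1 z.2 v).symm⟩
      refine ⟨SimpleGraph.Walk.cons adj1 (SimpleGraph.Walk.cons adj2 SimpleGraph.Walk.nil),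
        by simp [SimpleGraph.Walk.isPath_def, huv, hzu, hzv, Ne.symm hzu], ?_⟩
      have e1 : c s(u, (z : Γ)) = label u z := by
        simp only [hc, Sym2.lift_mk, hf]
        rw [dif_neg (by tauto), dif_pos ⟨z.2, hu⟩]
      have e2 : c s((z : Γ), v) = label v z := by
        simp only [hc, Sym2.lift_mk, hf]
        rw [dif_pos ⟨z.2, hv⟩]
      simp [e1, e2, hzne]
  have := Nat.sInf_le h2
  rw [rainbowConnectionNumber] at hrc
  omega
end

section
/- Let Γ be a finite non-abelian group with nontrivial center Z(Γ), let 𝒞 be the collection of all maximal abelian subgroups of Γ, and suppose the intersection of every two distinct members of 𝒞 equals Z(Γ). Then the rainbow connection number of the commuting graph CG(Γ) equals 3 if and only if |𝒞| > 2^{|Z(Γ)|}. -/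
set_option linter.unusedSectionVars false




section Aux
variable {Γ : Type*} [Group Γ]

lemma closure_isCommutative_of_comm {S : Set Γ}
    (h : ∀ x ∈ S, ∀ y ∈ S, Commute x y) : IsMulCommutative (Subgroup.closure S) := by
  constructor
  constructor
  rintro ⟨a, ha⟩ ⟨b, hb⟩
  apply Subtype.ext
  simp only [MulMemClass.mk_mul_mk]
  refine Subgroup.closure_induction₂ (p := fun x y _ _ => Commute x y)
    (fun x y hx hy => h x hx y hy)
    (fun x _ => Commute.one_left x)
    (fun x _ => Commute.one_right x)
    (fun x y z _ _ _ h1 h2 => h1.mul_left h2)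
    (fun y z x _ _ _ h1 h2 => h1.mul_right h2)
    (fun x y _ _ h1 => h1.inv_left)
    (fun x y _ _ h1 => h1.inv_right) ha hb

variable [Finite Γ]

lemma exists_maximalAbelian_ge (K : Subgroup Γ) (hK : IsMulCommutative K) :
    ∃ M : Subgroup Γ, IsMaximalAbelian M ∧ K ≤ M := by
  obtain ⟨M, hM, hmax⟩ := Set.Finite.exists_maximalFor id
    {H : Subgroup Γ | IsMulCommutative H ∧ K ≤ H} (Set.toFinite _) ⟨K, hK, le_rfl⟩
  exact ⟨M, ⟨hM.1, fun L hL hML => le_antisymm (@hmax L ⟨hL, hM.2.trans hML⟩ hML) hML⟩, hM.2⟩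

lemma exists_maximalAbelian_mem (g : Γ) :
    ∃ M : Subgroup Γ, IsMaximalAbelian M ∧ g ∈ M := by
  obtain ⟨M, hM, hle⟩ := exists_maximalAbelian_ge (Subgroup.zpowers g) inferInstance
  exact ⟨M, hM, hle (Subgroup.mem_zpowers g)⟩

lemma mem_of_commute
    (hint : ∀ K L : Subgroup Γ, IsMaximalAbelian K → IsMaximalAbelian L → K ≠ L →
      (K : Set Γ) ∩ (L : Set Γ) = (Subgroup.center Γ : Set Γ))
    {H : Subgroup Γ} (hH : IsMaximalAbelian H) {x w : Γ}
    (hx : x ∈ H) (hxz : x ∉ Subgroup.center Γ) (hc : Commute x w) : w ∈ H := by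
  have hcomm : IsMulCommutative (Subgroup.closure {x, w}) := by
    apply closure_isCommutative_of_comm
    rintro a ha b hb
    rcases ha with rfl | ha
    · rcases hb with rfl | hb
      · exact Commute.refl _
      · rw [Set.mem_singleton_iff] at hb; subst hb; exact hc
    · rw [Set.mem_singleton_iff] at ha; subst ha
      rcases hb with rfl | hb
      · exact hc.symm
      · rw [Set.mem_singleton_iff] at hb; subst hb; exact Commute.refl _
  obtain ⟨M, hM, hle⟩ := exists_maximalAbelian_ge _ hcomm
  have hxM : x ∈ M := hle (Subgroup.subset_closure (by simp))
  have hwM : w ∈ M := hle (Subgroup.subset_closure (by simp))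
  by_cases hMH : M = H
  · exact hMH ▸ hwM
  · exfalso
    have : x ∈ (M : Set Γ) ∩ (H : Set Γ) := ⟨hxM, hx⟩
    rw [hint M H hM hH hMH] at this
    exact hxz this

lemma exists_noncentral (hna : ∃ a b : Γ, a * b ≠ b * a)
    {H : Subgroup Γ} (hH : IsMaximalAbelian H) : ∃ x, x ∈ H ∧ x ∉ Subgroup.center Γ := by
  by_contra hcon
  push_neg at hcon
  have hHZ : H ≤ Subgroup.center Γ := fun z hz => hcon z hz
  have hZH : Subgroup.center Γ = H := hH.2 _ inferInstance hHZ
  obtain ⟨a, b, hab⟩ := hna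
  have haz : a ∉ Subgroup.center Γ := fun h => hab (Subgroup.mem_center_iff.mp h b).symm
  have hKcomm : IsMulCommutative (Subgroup.closure (insert a (Subgroup.center Γ : Set Γ))) := by
    apply closure_isCommutative_of_comm
    rintro x hx y hy
    rcases hx with rfl | hx
    · rcases hy with rfl | hy
      · exact Commute.refl _
      · exact (Subgroup.mem_center_iff.mp hy _)
    · exact (Subgroup.mem_center_iff.mp hx y).symm
  have hHK : H ≤ Subgroup.closure (insert a (Subgroup.center Γ : Set Γ)) := fun z hz =>
    Subgroup.subset_closure (Set.mem_insert_of_mem _ (hHZ hz))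
  have hKH := hH.2 _ hKcomm hHK
  have haH : a ∈ H := hKH ▸ Subgroup.subset_closure (Set.mem_insert _ _)
  exact haz (hHZ haH)

lemma not_commute_of_ne
    (hint : ∀ K L : Subgroup Γ, IsMaximalAbelian K → IsMaximalAbelian L → K ≠ L →
      (K : Set Γ) ∩ (L : Set Γ) = (Subgroup.center Γ : Set Γ))
    {H L : Subgroup Γ} (hH : IsMaximalAbelian H) (hL : IsMaximalAbelian L) (hHL : H ≠ L)
    {x y : Γ} (hx : x ∈ H) (hxz : x ∉ Subgroup.center Γ)
    (hy : y ∈ L) (hyz : y ∉ Subgroup.center Γ) : ¬ Commute x y ∧ x ≠ y := by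
  have hnc : ¬ Commute x y := by
    intro hc
    have hyH : y ∈ H := mem_of_commute hint hH hx hxz hc
    have : y ∈ (H : Set Γ) ∩ (L : Set Γ) := ⟨hyH, hy⟩
    rw [hint H L hH hL hHL] at this
    exact hyz this
  exact ⟨hnc, fun h => hnc (h ▸ Commute.refl x)⟩

end Aux
def RCSet {V : Type*} (G : SimpleGraph V) : Set ℕ :=
  {k : ℕ | ∃ c : Sym2 V → Fin k,
    ∀ u v : V, u ≠ v → ∃ p : G.Walk u v, p.IsPath ∧ (p.edges.map c).Nodup}

lemma RCSet_mono {V : Type*} {G : SimpleGraph V} {k l : ℕ} (hkl : k ≤ l)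
    (hk : k ∈ RCSet G) : l ∈ RCSet G := by
  obtain ⟨c, hc⟩ := hk
  refine ⟨Fin.castLE hkl ∘ c, fun u v huv => ?_⟩
  obtain ⟨p, hp, hnd⟩ := hc u v huv
  refine ⟨p, hp, ?_⟩
  rw [show p.edges.map (Fin.castLE hkl ∘ c) = (p.edges.map c).map (Fin.castLE hkl) by simp]
  exact hnd.map (Fin.castLE_injective hkl)

section Graph
variable {Γ : Type*} [Group Γ]

lemma adj_commutingGraph {u v : Γ} (h : u ≠ v) (hc : u * v = v * u) :
    (commutingGraph Γ).Adj u v := ⟨h, hc⟩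

lemma three_mem_RCSet (hz : Subgroup.center Γ ≠ ⊥) :
    3 ∈ RCSet (commutingGraph Γ) := by
  classical
  obtain ⟨⟨t, htmem⟩, htne⟩ := Subgroup.ne_bot_iff_exists_ne_one.mp hz
  have ht1 : t ≠ 1 := by simpa using htne
  refine ⟨Sym2.lift ⟨fun u v =>
    if u = 1 ∨ v = 1 then (if u = t ∨ v = t then 1 else 0)
    else if u = t ∨ v = t then 2 else 1, by intro u v; simp [or_comm]⟩, fun u v huv => ?_⟩
  by_cases hcomm : u * v = v * u
  · refine ⟨.cons (adj_commutingGraph huv hcomm) .nil, ?_, by simp⟩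
    simp [SimpleGraph.Walk.isPath_def, huv]
  · have hu1 : u ≠ 1 := by rintro rfl; exact hcomm (by group)
    have hv1 : v ≠ 1 := by rintro rfl; exact hcomm (by group)
    have hut : u ≠ t := by rintro rfl; exact hcomm (Subgroup.mem_center_iff.mp htmem v).symm
    have hvt : v ≠ t := by rintro rfl; exact hcomm (Subgroup.mem_center_iff.mp htmem u)
    refine ⟨.cons (adj_commutingGraph hu1 (by group)) (.cons (adj_commutingGraph ht1.symm (by group))
      (.cons (adj_commutingGraph hvt.symm (Subgroup.mem_center_iff.mp htmem v).symm) .nil)), ?_, ?_⟩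
    · simp [SimpleGraph.Walk.isPath_def, hu1, hut, huv, ht1, hv1, hvt,
        Ne.symm hv1, Ne.symm hvt, Ne.symm ht1]
    · simp [Sym2.lift_mk, hu1, hut, ht1, hv1, hvt, Ne.symm ht1]

end Graph

section Main

variable {Γ : Type*} [Group Γ] [Finite Γ]


lemma walk_middle {V : Type*} {G : SimpleGraph V} {u v : V} (p : G.Walk u v)
    (hlen : p.length ≤ 2) (huv : u ≠ v) (hadj : ¬ G.Adj u v) :
    ∃ w, G.Adj u w ∧ G.Adj w v ∧ p.edges = [s(u, w), s(w, v)] := by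
  cases p with
  | nil => exact absurd rfl huv
  | cons h q =>
    cases q with
    | nil => exact absurd h hadj
    | cons h' r =>
      cases r with
      | nil => exact ⟨_, h, h', by simp⟩
      | cons h'' r' =>
        simp only [SimpleGraph.Walk.length_cons] at hlen
        omega

lemma card_le_of_two_mem
    (hna : ∃ a b : Γ, a * b ≠ b * a)
    (hint : ∀ K L : Subgroup Γ, IsMaximalAbelian K → IsMaximalAbelian L → K ≠ L →
      (K : Set Γ) ∩ (L : Set Γ) = (Subgroup.center Γ : Set Γ))
    (h2 : 2 ∈ RCSet (commutingGraph Γ)) :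
    {H : Subgroup Γ | IsMaximalAbelian H}.ncard ≤ 2 ^ Nat.card (Subgroup.center Γ) := by
  classical
  obtain ⟨c, hc⟩ := h2
  have hsel : ∀ H : {H : Subgroup Γ // IsMaximalAbelian H},
      ∃ x, x ∈ H.1 ∧ x ∉ Subgroup.center Γ := fun H => exists_noncentral hna H.2
  choose x hx hxz using hsel
  have hinj : Function.Injective
      (fun H : {H : Subgroup Γ // IsMaximalAbelian H} =>
        (fun z : ↥(Subgroup.center Γ) => c s(x H, (z : Γ)))) := by
    intro H L hfeq
    by_contra hne
    have hne' : H.1 ≠ L.1 := fun h => hne (Subtype.ext h)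
    obtain ⟨hnc, hxy⟩ := not_commute_of_ne hint H.2 L.2 hne' (hx H) (hxz H) (hx L) (hxz L)
    obtain ⟨p, hp, hnd⟩ := hc (x H) (x L) hxy
    have hplen : p.length ≤ 2 := by
      have h1 : (p.edges.map c).length = p.length := by
        rw [List.length_map, SimpleGraph.Walk.length_edges]
      have := hnd.length_le_card
      simpa [h1] using this
    have hadj : ¬ (commutingGraph Γ).Adj (x H) (x L) := fun h => hnc h.2
    obtain ⟨w, haw, hbw, hedges⟩ := walk_middle p hplen hxy hadj
    have hwH : w ∈ H.1 := mem_of_commute hint H.2 (hx H) (hxz H) haw.2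
    have hwL : w ∈ L.1 := mem_of_commute hint L.2 (hx L) (hxz L) hbw.2.symm
    have hwZ : w ∈ Subgroup.center Γ := by
      have : w ∈ (H.1 : Set Γ) ∩ (L.1 : Set Γ) := ⟨hwH, hwL⟩
      rwa [hint H.1 L.1 H.2 L.2 hne'] at this
    rw [hedges] at hnd
    simp only [List.map_cons, List.map_nil, List.nodup_cons, List.mem_cons,
      List.mem_singleton, List.not_mem_nil, or_false, List.nodup_nil, and_true] at hnd
    apply hnd.1
    have e1 : c s(x H, w) = c s(x H, ((⟨w, hwZ⟩ : ↥(Subgroup.center Γ)) : Γ)) := rfl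
    have e2 : c s(w, x L) = c s(x L, ((⟨w, hwZ⟩ : ↥(Subgroup.center Γ)) : Γ)) := by
      rw [Sym2.eq_swap]
    rw [e1, e2]; exact congrFun hfeq ⟨w, hwZ⟩
  have h1 : {H : Subgroup Γ | IsMaximalAbelian H}.ncard
      = Nat.card {H : Subgroup Γ // IsMaximalAbelian H} :=
    (Nat.card_coe_set_eq _).symm
  rw [h1]
  calc Nat.card {H : Subgroup Γ // IsMaximalAbelian H}
      ≤ Nat.card (↥(Subgroup.center Γ) → Fin 2) := Nat.card_le_card_of_injective _ hinj
    _ = 2 ^ Nat.card (Subgroup.center Γ) := by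
        rw [Nat.card_fun]; simp

lemma two_mem_of_card_le
    (hcard : {H : Subgroup Γ | IsMaximalAbelian H}.ncard ≤ 2 ^ Nat.card (Subgroup.center Γ)) :
    2 ∈ RCSet (commutingGraph Γ) := by
  classical
  have hcard' : Nat.card {H : Subgroup Γ // IsMaximalAbelian H}
      ≤ Nat.card (↥(Subgroup.center Γ) → Fin 2) := by
    rw [Nat.card_fun]
    rw [show {H : Subgroup Γ | IsMaximalAbelian H}.ncard
        = Nat.card {H : Subgroup Γ // IsMaximalAbelian H} from (Nat.card_coe_set_eq _).symm] at hcard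
    simpa using hcard
  haveI : Fintype {H : Subgroup Γ // IsMaximalAbelian H} := Fintype.ofFinite _
  haveI : Fintype (↥(Subgroup.center Γ) → Fin 2) := Fintype.ofFinite _
  obtain ⟨φ⟩ : Nonempty ({H : Subgroup Γ // IsMaximalAbelian H} ↪
      (↥(Subgroup.center Γ) → Fin 2)) := by
    apply Function.Embedding.nonempty_of_card_le
    rwa [← Nat.card_eq_fintype_card, ← Nat.card_eq_fintype_card]
  choose M hM hMem using fun g : Γ => exists_maximalAbelian_mem g
  set ψ : Γ → (↥(Subgroup.center Γ) → Fin 2) := fun g => φ ⟨M g, hM g⟩ with hψ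
  refine ⟨Sym2.lift ⟨fun u v =>
    if hu : u ∈ Subgroup.center Γ then
      (if v ∈ Subgroup.center Γ then 0 else ψ v ⟨u, hu⟩)
    else if hv : v ∈ Subgroup.center Γ then ψ u ⟨v, hv⟩ else 0, ?_⟩, fun u v huv => ?_⟩
  · intro u v
    by_cases hu : u ∈ Subgroup.center Γ <;> by_cases hv : v ∈ Subgroup.center Γ <;>
      simp [hu, hv]
  · by_cases hcomm : u * v = v * u
    · refine ⟨.cons (adj_commutingGraph huv hcomm) .nil, ?_, by simp⟩
      simp [SimpleGraph.Walk.isPath_def, huv]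
    · have hu : u ∉ Subgroup.center Γ := fun h =>
        hcomm (Subgroup.mem_center_iff.mp h v).symm
      have hv : v ∉ Subgroup.center Γ := fun h =>
        hcomm (Subgroup.mem_center_iff.mp h u)
      have hMne : M u ≠ M v := by
        intro h
        haveI := (hM u).1
        exact hcomm (Subgroup.mul_comm_of_mem_isMulCommutative _ (hMem u) (h ▸ hMem v))
      have hψne : ψ u ≠ ψ v := by
        intro h
        exact hMne (congrArg Subtype.val (φ.injective h))
      obtain ⟨w, hw⟩ := Function.ne_iff.mp hψne
      have hwu : (w : Γ) ≠ u := fun h => hu (h ▸ w.2)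
      have hwv : (w : Γ) ≠ v := fun h => hv (h ▸ w.2)
      refine ⟨.cons (adj_commutingGraph hwu.symm (Subgroup.mem_center_iff.mp w.2 u))
        (.cons (adj_commutingGraph hwv (Subgroup.mem_center_iff.mp w.2 v).symm) .nil), ?_, ?_⟩
      · simp [SimpleGraph.Walk.isPath_def, hwu, hwv, huv, Ne.symm hwu]
      · simp only [SimpleGraph.Walk.edges_cons, SimpleGraph.Walk.edges_nil,
          List.map_cons, List.map_nil, List.nodup_cons, List.mem_cons,
          List.not_mem_nil, or_false, List.mem_singleton, List.nodup_nil, and_true]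
        refine ⟨?_, not_false⟩
        rw [Sym2.lift_mk, Sym2.lift_mk]
        simp only [dif_neg hu, dif_pos w.2, hu, hv, dif_neg hv]
        simpa using hw
end Main

theorem rc_commutingGraph_eq_three_iff (Γ : Type*) [Group Γ] [Finite Γ]
    (hna : ∃ a b : Γ, a * b ≠ b * a)
    (hz : Subgroup.center Γ ≠ ⊥)
    (hint : ∀ K L : Subgroup Γ, IsMaximalAbelian K → IsMaximalAbelian L → K ≠ L →
      (K : Set Γ) ∩ (L : Set Γ) = (Subgroup.center Γ : Set Γ)) :
    rainbowConnectionNumber (commutingGraph Γ) = 3 ↔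
      2 ^ Nat.card (Subgroup.center Γ) <
        {H : Subgroup Γ | IsMaximalAbelian H}.ncard := by
  classical
  have hrc : rainbowConnectionNumber (commutingGraph Γ)
      = sInf (RCSet (commutingGraph Γ)) := rfl
  have h3 : 3 ∈ RCSet (commutingGraph Γ) := three_mem_RCSet hz
  rw [hrc]
  constructor
  · intro h
    by_contra hle
    push_neg at hle
    have h2 := two_mem_of_card_le hle
    have := Nat.sInf_le h2
    omega
  · intro hcard
    have hle3 := Nat.sInf_le h3
    have hmem := Nat.sInf_mem (⟨3, h3⟩ : (RCSet (commutingGraph Γ)).Nonempty)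
    by_contra hne
    have hlt : sInf (RCSet (commutingGraph Γ)) ≤ 2 := by omega
    have h2 : 2 ∈ RCSet (commutingGraph Γ) := RCSet_mono hlt hmem
    have := card_le_of_two_mem hna hint h2
    omega
end
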